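/- arXiv:1504.01265 — 5 statements merged into one kernel-verified Lean document; each statement's English description precedes it below -/
import Mathlib

section
/- Let k = 2, q ≥ 3, 1 ≤ m ≤ ⌊q/2⌋, and θ > θ_m = 1 + 2√(m(q-m)) with θ ≠ q+1. Setting x_1 = (θ-1-√((θ-1)²-4m(q-m)))/(2m) and x_2 = (θ-1+√((θ-1)²-4m(q-m)))/(2m), the numbers h_i = 2 ln x_i for i = 1,2 are nonzero fixed points of f_m, i.e., f_m(h_i) = h_i. -/
/-!
With `x = exp (h / 2)`, the equation `f_m(h) = h` becomes
`((θ + m - 1) x² + (q - m)) / (m x² + q - m - 1 + θ) = x`. When `m x² + (q - m) = (θ - 1) x`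
the denominator equals `(θ - 1)(x + 1)` and the numerator `(θ - 1)(x + 1) x`, so the positive roots
`x₁, x₂` of this quadratic give fixed points `2 log xᵢ`. They are nonzero because `x = 1` is a root
only when `θ = q + 1`.
-/

open Real

lemma quadratic_eq_of_eq_root {a b p x : ℝ} (ha : a ≠ 0) (hd : 0 ≤ p ^ 2 - 4 * a * b)
    (hx : x = (p - √(p ^ 2 - 4 * a * b)) / (2 * a) ∨ x = (p + √(p ^ 2 - 4 * a * b)) / (2 * a)) :
    a * x ^ 2 + b = p * x := by
  have hdisc : discrim a (-p) b = √(p ^ 2 - 4 * a * b) * √(p ^ 2 - 4 * a * b) := by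
    rw [mul_self_sqrt hd, discrim, neg_sq]
  have hroot := (quadratic_eq_zero_iff ha hdisc x).mpr (by rw [neg_neg]; tauto)
  linear_combination hroot

lemma sub_sqrt_discrim_div_pos {a b p : ℝ} (ha : 0 < a) (hb : 0 < b) (hp : 0 < p) :
    0 < (p - √(p ^ 2 - 4 * a * b)) / (2 * a) := by
  have hlt : √(p ^ 2 - 4 * a * b) < p := (sqrt_lt' hp).mpr (by nlinarith)
  exact div_pos (by linarith) (by linarith)

lemma fixedPoint_two_mul_log_of_quadratic {a c θ x : ℝ} (hθ : 1 < θ) (hx : 0 < x)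
    (hquad : a * x ^ 2 + (c - a) = (θ - 1) * x) (hθc : θ ≠ c + 1) :
    2 * log (((θ + a - 1) * exp (2 * log x) + (c - a)) /
        (a * exp (2 * log x) + c - a - 1 + θ)) = 2 * log x ∧ 2 * log x ≠ 0 := by
  have hexp : exp (2 * log x) = x ^ 2 := by
    rw [mul_comm, exp_mul, exp_log hx, rpow_two]
  have hden : a * x ^ 2 + c - a - 1 + θ = (θ - 1) * (x + 1) := by
    linear_combination hquad
  have hratio : ((θ + a - 1) * x ^ 2 + (c - a)) / (a * x ^ 2 + c - a - 1 + θ) = x := by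
    rw [div_eq_iff (by rw [hden]; nlinarith)]
    linear_combination (1 - x) * hquad
  refine ⟨by rw [hexp, hratio], fun hlog => hθc ?_⟩
  have hx1 : x = 1 := eq_one_of_pos_of_log_eq_zero hx (by linarith)
  rw [hx1] at hquad
  linarith

theorem hi_nonzero_fixed_general (θ : ℝ) (q m : ℕ) (hm : 1 ≤ m)
    (hm2 : m ≤ q / 2)
    (hθm : 1 + 2 * Real.sqrt ((m : ℝ) * ((q : ℝ) - m)) < θ)
    (hθc : θ ≠ (q : ℝ) + 1) :
    let x₁ : ℝ := (θ - 1 - Real.sqrt ((θ - 1) ^ 2 - 4 * m * ((q : ℝ) - m))) / (2 * m)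
    let x₂ : ℝ := (θ - 1 + Real.sqrt ((θ - 1) ^ 2 - 4 * m * ((q : ℝ) - m))) / (2 * m)
    let f : ℝ → ℝ := fun h =>
      2 * Real.log (((θ + m - 1) * Real.exp h + ((q : ℝ) - m)) /
        ((m : ℝ) * Real.exp h + (q : ℝ) - m - 1 + θ))
    f (2 * Real.log x₁) = 2 * Real.log x₁ ∧ 2 * Real.log x₁ ≠ 0 ∧
    f (2 * Real.log x₂) = 2 * Real.log x₂ ∧ 2 * Real.log x₂ ≠ 0 := by
  intro x₁ x₂ f
  have hm0 : (0 : ℝ) < m := by exact_mod_cast hm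
  have hqm : (0 : ℝ) < q - m := by
    rw [sub_pos, Nat.cast_lt]
    omega
  have hsqrt : 0 ≤ √((m : ℝ) * (q - m)) := sqrt_nonneg _
  have hθ : 1 < θ := by linarith
  have hdisc : 0 ≤ (θ - 1) ^ 2 - 4 * m * ((q : ℝ) - m) := by
    nlinarith [sq_sqrt (by positivity : (0 : ℝ) ≤ m * (q - m))]
  have hx₁ := fixedPoint_two_mul_log_of_quadratic hθ
    (sub_sqrt_discrim_div_pos hm0 hqm (by linarith))
    (quadratic_eq_of_eq_root hm0.ne' hdisc (Or.inl rfl)) hθc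
  have hx₂ := fixedPoint_two_mul_log_of_quadratic hθ (x := x₂) (by positivity)
    (quadratic_eq_of_eq_root hm0.ne' hdisc (Or.inr rfl)) hθc
  exact ⟨hx₁.1, hx₁.2, hx₂.1, hx₂.2⟩

/-- For k = 2, q ≥ 3, 1 ≤ m ≤ ⌊q/2⌋, θ > θ_m = 1+2√(m(q-m)), θ ≠ q+1:
with x_i given by the quadratic formula, h_i = 2 ln x_i are nonzero fixed
points of f_m. -/
theorem hi_nonzero_fixed (θ : ℝ) (q m : ℕ) (hq : 3 ≤ q) (hm : 1 ≤ m)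
    (hm2 : m ≤ q / 2)
    (hθm : 1 + 2 * Real.sqrt ((m : ℝ) * ((q : ℝ) - m)) < θ)
    (hθc : θ ≠ (q : ℝ) + 1) :
    let x₁ : ℝ := (θ - 1 - Real.sqrt ((θ - 1) ^ 2 - 4 * m * ((q : ℝ) - m))) / (2 * m)
    let x₂ : ℝ := (θ - 1 + Real.sqrt ((θ - 1) ^ 2 - 4 * m * ((q : ℝ) - m))) / (2 * m)
    let f : ℝ → ℝ := fun h =>
      2 * Real.log (((θ + m - 1) * Real.exp h + ((q : ℝ) - m)) /
        ((m : ℝ) * Real.exp h + (q : ℝ) - m - 1 + θ))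
    f (2 * Real.log x₁) = 2 * Real.log x₁ ∧ 2 * Real.log x₁ ≠ 0 ∧
    f (2 * Real.log x₂) = 2 * Real.log x₂ ∧ 2 * Real.log x₂ ≠ 0 :=
  hi_nonzero_fixed_general θ q m hm hm2 hθm hθc
end

section
/- For k = 2, θ > θ_m (with θ_m = 1+2√(m(q-m))), q ≥ 3, 1 ≤ m ≤ ⌊q/2⌋, any fixed point of f_m(h) = 2 ln(((θ+m-1)e^h+q-m)/(m e^h+q-m-1+θ)) is one of 0, h_1 = 2 ln x_1, or h_2 = 2 ln x_2, where x_{1,2} = (θ-1 ∓ √((θ-1)²-4m(q-m)))/(2m). -/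
/-! Put x = exp (h / 2). Clearing denominators in the fixed-point equation gives the cubic
(x - 1) (m x² - (θ - 1) x + (q - m)) = 0, so x = 1 (that is, h = 0) or x is one of the two
roots x₁, x₂ of the quadratic factor. -/

open Real

theorem eq_exp_half_mul_of_two_mul_log_div_eq {N D h : ℝ} (hN : 0 < N) (hD : 0 < D)
    (hfix : 2 * log (N / D) = h) : N = exp (h / 2) * D := by
  have hlog : log (N / D) = h / 2 := by linarith
  rw [← hlog, exp_log (div_pos hN hD), div_mul_cancel₀ N hD.ne']

theorem eq_one_or_quadratic_eq_zero_of_fixed {a b t x : ℝ}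
    (hfix : (t + a) * x ^ 2 + b = x * (a * x ^ 2 + b + t)) :
    x = 1 ∨ a * (x * x) + -t * x + b = 0 := by
  have hcubic : (x - 1) * (a * (x * x) + -t * x + b) = 0 := by linear_combination -hfix
  rcases mul_eq_zero.mp hcubic with h1 | h2
  · exact Or.inl (sub_eq_zero.mp h1)
  · exact Or.inr h2

/-- The existence of the root `x` makes the discriminant nonnegative, so `√` takes no junk value. -/
theorem eq_quadratic_roots_of_quadratic_eq_zero {a b c x : ℝ} (ha : a ≠ 0)
    (hx : a * (x * x) + b * x + c = 0) :
    x = (-b - √(discrim a b c)) / (2 * a) ∨ x = (-b + √(discrim a b c)) / (2 * a) := by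
  have hdiscrim : 0 ≤ discrim a b c :=
    (quadratic_eq_zero_iff_discrim_eq_sq ha x).mp hx ▸ sq_nonneg _
  exact ((quadratic_eq_zero_iff ha (mul_self_sqrt hdiscrim).symm x).mp hx).symm

theorem fixed_points_classified_general (θ : ℝ) (q m : ℕ) (hm : 1 ≤ m)
    (hm2 : m ≤ q / 2)
    (hθm : 1 + 2 * Real.sqrt ((m : ℝ) * ((q : ℝ) - m)) < θ) (h : ℝ)
    (hfix : 2 * Real.log (((θ + m - 1) * Real.exp h + ((q : ℝ) - m)) /
      ((m : ℝ) * Real.exp h + (q : ℝ) - m - 1 + θ)) = h) :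
    h = 0 ∨
    h = 2 * Real.log ((θ - 1 - Real.sqrt ((θ - 1) ^ 2 - 4 * m * ((q : ℝ) - m))) / (2 * m)) ∨
    h = 2 * Real.log ((θ - 1 + Real.sqrt ((θ - 1) ^ 2 - 4 * m * ((q : ℝ) - m))) / (2 * m)) := by
  have hm0 : (0 : ℝ) < m := by exact_mod_cast hm
  have hqm : (0 : ℝ) < q - m := sub_pos.mpr (by exact_mod_cast (by omega : m < q))
  have hθ : 0 < θ - 1 := by linarith [sqrt_nonneg ((m : ℝ) * (q - m))]
  have he := exp_pos h
  set x := exp (h / 2)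
  have hh : h = 2 * log x := by rw [log_exp]; ring
  have hex : exp h = x ^ 2 := by rw [sq, ← exp_add, add_halves]
  have hxfix := eq_exp_half_mul_of_two_mul_log_div_eq (by nlinarith) (by nlinarith) hfix
  rw [hex] at hxfix
  rcases eq_one_or_quadratic_eq_zero_of_fixed (a := m) (b := q - m) (t := θ - 1) (x := x)
    (by linear_combination hxfix) with hx1 | hquad
  · left
    rw [hh, hx1, log_one, mul_zero]
  · right
    have hroots := eq_quadratic_roots_of_quadratic_eq_zero hm0.ne' hquad
    simp only [discrim, neg_neg, neg_sq] at hroots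
    rcases hroots with hx | hx
    · exact Or.inl (by rw [hh, hx])
    · exact Or.inr (by rw [hh, hx])

/-- For k = 2, θ > θ_m, q ≥ 3, 1 ≤ m ≤ ⌊q/2⌋: any fixed point of f_m is one
of 0, h₁ = 2 ln x₁ or h₂ = 2 ln x₂. -/
theorem fixed_points_classified (θ : ℝ) (q m : ℕ) (hq : 3 ≤ q) (hm : 1 ≤ m)
    (hm2 : m ≤ q / 2)
    (hθm : 1 + 2 * Real.sqrt ((m : ℝ) * ((q : ℝ) - m)) < θ) (h : ℝ)
    (hfix : 2 * Real.log (((θ + m - 1) * Real.exp h + ((q : ℝ) - m)) /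
      ((m : ℝ) * Real.exp h + (q : ℝ) - m - 1 + θ)) = h) :
    h = 0 ∨
    h = 2 * Real.log ((θ - 1 - Real.sqrt ((θ - 1) ^ 2 - 4 * m * ((q : ℝ) - m))) / (2 * m)) ∨
    h = 2 * Real.log ((θ - 1 + Real.sqrt ((θ - 1) ^ 2 - 4 * m * ((q : ℝ) - m))) / (2 * m)) :=
  fixed_points_classified_general θ q m hm hm2 hθm h hfix
end

section
/- A real number h is a fixed point of f_m with k=2 if and only if x = e^{h/2} > 0 satisfies m x² - (θ-1) x + (q-m) = 0 or x = 1. Equivalently, substituting x = e^{h/2} reduces the fixed point equation h = 2 ln(((θ+m-1)x²+q-m)/(m x²+q-m-1+θ)) to (x-1)(m x² - (θ-1)x + q-m) = 0. -/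
/-! With x = e^{h/2}, the fixed-point equation 2 log(N/D) = h says N/D = x, since N and D are
positive quadratics in x (as m ≤ q and θ > 1). Clearing the denominator, the equation becomes
N - x D = -(x - 1)(m x² - (θ - 1) x + (q - m)) = 0. -/

open Real

lemma two_mul_log_eq_iff {r : ℝ} (hr : 0 < r) (h : ℝ) : 2 * log r = h ↔ r = exp (h / 2) := by
  constructor
  · rintro rfl
    rw [mul_div_cancel_left₀ _ two_ne_zero, exp_log hr]
  · rintro rfl
    rw [log_exp]
    ring

section

variable {θ m q : ℝ}

lemma fixedPoint_numerator_pos (hθ : 1 < θ) (hm : 0 ≤ m) (hmq : m ≤ q) {y : ℝ} (hy : 0 < y) :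
    0 < (θ + m - 1) * y + (q - m) := by
  have : 0 < (θ + m - 1) * y := mul_pos (by linarith) hy
  linarith

lemma fixedPoint_denominator_pos (hθ : 1 < θ) (hm : 0 ≤ m) (hmq : m ≤ q) {y : ℝ} (hy : 0 ≤ y) :
    0 < m * y + q - m - 1 + θ := by
  have : 0 ≤ m * y := mul_nonneg hm hy
  linarith

lemma fixedPoint_div_eq_self_iff {x : ℝ} (hD : m * x ^ 2 + q - m - 1 + θ ≠ 0) :
    ((θ + m - 1) * x ^ 2 + (q - m)) / (m * x ^ 2 + q - m - 1 + θ) = x ↔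
      (x - 1) * (m * x ^ 2 - (θ - 1) * x + (q - m)) = 0 := by
  rw [div_eq_iff hD, ← sub_eq_zero, ← neg_eq_zero (a := (x - 1) * _)]
  constructor <;> intro h <;> linear_combination h

end

theorem fixed_point_iff_general (θ : ℝ) (q m : ℕ)
    (hm2 : m ≤ q - 1) (hθ : 1 < θ) (h : ℝ) :
    (2 * Real.log (((θ + m - 1) * Real.exp h + ((q : ℝ) - m)) /
        ((m : ℝ) * Real.exp h + (q : ℝ) - m - 1 + θ)) = h ↔
      ((m : ℝ) * Real.exp (h / 2) ^ 2 - (θ - 1) * Real.exp (h / 2) + ((q : ℝ) - m) = 0 ∨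
        Real.exp (h / 2) = 1)) ∧
    (2 * Real.log (((θ + m - 1) * Real.exp h + ((q : ℝ) - m)) /
        ((m : ℝ) * Real.exp h + (q : ℝ) - m - 1 + θ)) = h ↔
      (Real.exp (h / 2) - 1) *
        ((m : ℝ) * Real.exp (h / 2) ^ 2 - (θ - 1) * Real.exp (h / 2) + ((q : ℝ) - m)) = 0) := by
  have hm : (0 : ℝ) ≤ m := m.cast_nonneg
  have hmq : (m : ℝ) ≤ q := by exact_mod_cast hm2.trans (q.sub_le 1)
  have hN := fixedPoint_numerator_pos hθ hm hmq (exp_pos h)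
  have hD := fixedPoint_denominator_pos hθ hm hmq (exp_pos h).le
  have hexp : exp h = exp (h / 2) ^ 2 := by rw [← exp_nat_mul]; ring_nf
  rw [two_mul_log_eq_iff (div_pos hN hD), hexp, fixedPoint_div_eq_self_iff (hexp ▸ hD).ne']
  refine ⟨?_, Iff.rfl⟩
  rw [mul_eq_zero, sub_eq_zero, or_comm]

/-- For k = 2: h is a fixed point of f_m iff x = e^{h/2} satisfies
m x² - (θ-1)x + (q-m) = 0 or x = 1, equivalently (x-1)(m x²-(θ-1)x+(q-m)) = 0. -/
theorem fixed_point_iff (θ : ℝ) (q m : ℕ) (hq : 3 ≤ q) (hm : 1 ≤ m)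
    (hm2 : m ≤ q - 1) (hθ : 1 < θ) (h : ℝ) :
    (2 * Real.log (((θ + m - 1) * Real.exp h + ((q : ℝ) - m)) /
        ((m : ℝ) * Real.exp h + (q : ℝ) - m - 1 + θ)) = h ↔
      ((m : ℝ) * Real.exp (h / 2) ^ 2 - (θ - 1) * Real.exp (h / 2) + ((q : ℝ) - m) = 0 ∨
        Real.exp (h / 2) = 1)) ∧
    (2 * Real.log (((θ + m - 1) * Real.exp h + ((q : ℝ) - m)) /
        ((m : ℝ) * Real.exp h + (q : ℝ) - m - 1 + θ)) = h ↔
      (Real.exp (h / 2) - 1) *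
        ((m : ℝ) * Real.exp (h / 2) ^ 2 - (θ - 1) * Real.exp (h / 2) + ((q : ℝ) - m)) = 0) :=
  fixed_point_iff_general θ q m hm2 hθ h
end

section
/- For k=2 and θ > q+1 (so that 1 is between the roots of m x²-(θ-1)x+(q-m)): for any initial vector v ∈ I_m with common value v_1 > 0, the iterates Gⁿ(v) converge to the vector (h_2,...,h_2,0,...,0) (m copies of h_2); if v_1 < 0 they converge to (h_1,...,h_1,0,...,0); and if v_1 = 0 then Gⁿ(v) = 0 for all n. -/
/-!
On `I_m` the map `G` reduces to the one-dimensional map `f_m`, which is continuous and increasing.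
Writing `x = exp (h / 2)`, one has `f_m h < h` iff `(x - 1) (m x² - (θ - 1) x + (q - m)) > 0`, and
the quadratic has roots `x₁ < 1 < x₂` since its value at `1` is `q + 1 - θ < 0`. So `f_m` pushes
every point of `(0, ∞)` towards `h₂ = 2 log x₂` and every point of `(-∞, 0)` towards
`h₁ = 2 log x₁`, and the orbits of an increasing continuous map with this property converge
monotonically to the fixed point.
-/

open Filter Function Topology Real

section Iterate

variable {α : Type*} [ConditionallyCompleteLinearOrder α] [TopologicalSpace α] [OrderTopology α]
  {f : α → α} {a L : α}

theorem tendsto_iterate_of_le_of_lt_map (hf : Continuous f) (hmono : Monotone f)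
    (hL : IsFixedPt f L) (haL : a ≤ L) (hlt : ∀ x, a ≤ x → x < L → x < f x) :
    Tendsto (fun n => f^[n] a) atTop (𝓝 L) := by
  have hbound : ∀ n, f^[n] a ≤ L := fun n => (hmono.iterate n haL).trans_eq (hL.iterate n)
  have hbdd : BddAbove (Set.range fun n => f^[n] a) := ⟨L, Set.forall_mem_range.2 hbound⟩
  have ha : a ≤ f a := haL.lt_or_eq.elim (fun h => (hlt a le_rfl h).le) fun h => h ▸ hL.ge
  have hT := tendsto_atTop_ciSup (hmono.monotone_iterate_of_le_map ha) hbdd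
  have hfix := isFixedPt_of_tendsto_iterate hT hf.continuousAt
  obtain hlim | hlim := (ciSup_le hbound).lt_or_eq
  · exact absurd hfix (hlt _ (le_ciSup hbdd 0) hlim).ne'
  · rwa [hlim] at hT

theorem tendsto_iterate_of_le_of_map_lt (hf : Continuous f) (hmono : Monotone f)
    (hL : IsFixedPt f L) (hLa : L ≤ a) (hlt : ∀ x, L < x → x ≤ a → f x < x) :
    Tendsto (fun n => f^[n] a) atTop (𝓝 L) :=
  tendsto_iterate_of_le_of_lt_map (α := αᵒᵈ) hf hmono.dual hL hLa fun x hax hxL => hlt x hxL hax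

theorem tendsto_iterate_of_isFixedPt {s : Set α} (hs : s.OrdConnected) (hf : Continuous f)
    (hmono : Monotone f) (hL : IsFixedPt f L) (hLs : L ∈ s) (has : a ∈ s)
    (hbelow : ∀ x ∈ s, x < L → x < f x) (habove : ∀ x ∈ s, L < x → f x < x) :
    Tendsto (fun n => f^[n] a) atTop (𝓝 L) := by
  obtain haL | hLa := le_total a L
  · exact tendsto_iterate_of_le_of_lt_map hf hmono hL haL fun x hax hxL =>
      hbelow x (hs.out has hLs ⟨hax, hxL.le⟩) hxL
  · exact tendsto_iterate_of_le_of_map_lt hf hmono hL hLa fun x hLx hxa =>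
      habove x (hs.out hLs has ⟨hLx.le, hxa⟩) hLx

end Iterate

section RestrictedMap

variable {θ q m : ℝ}

/-- The paper's `f_m`: the map `G` on `I_m`, in the common value of the first `m` coordinates. -/
noncomputable def restrictedMap (θ q m : ℝ) (h : ℝ) : ℝ :=
  2 * log (((θ + m - 1) * exp h + (q - m)) / (m * exp h + (θ + q - m - 1)))

noncomputable def lowerRoot (θ q m : ℝ) : ℝ := (θ - 1 - √((θ - 1) ^ 2 - 4 * m * (q - m))) / (2 * m)

noncomputable def upperRoot (θ q m : ℝ) : ℝ := (θ - 1 + √((θ - 1) ^ 2 - 4 * m * (q - m))) / (2 * m)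

theorem quadratic_eq_mul_sub_roots (hm : m ≠ 0) (hdisc : 0 ≤ (θ - 1) ^ 2 - 4 * m * (q - m))
    (x : ℝ) :
    m * x ^ 2 - (θ - 1) * x + (q - m) =
      m * ((x - lowerRoot θ q m) * (x - upperRoot θ q m)) := by
  have hs := sq_sqrt hdisc
  rw [lowerRoot, upperRoot]
  generalize √((θ - 1) ^ 2 - 4 * m * (q - m)) = s at hs
  field_simp
  linear_combination hs

theorem discrim_nonneg (hm : 0 < m) (hmq : m < q) (hθ : q + 1 < θ) :
    0 ≤ (θ - 1) ^ 2 - 4 * m * (q - m) := by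
  nlinarith [sq_nonneg (q - 2 * m)]

theorem roots_bracket_one (hm : 0 < m) (hmq : m < q) (hθ : q + 1 < θ) :
    0 < lowerRoot θ q m ∧ lowerRoot θ q m < 1 ∧ 1 < upperRoot θ q m := by
  have hle : lowerRoot θ q m ≤ upperRoot θ q m := by
    rw [lowerRoot, upperRoot]; gcongr; linarith [sqrt_nonneg ((θ - 1) ^ 2 - 4 * m * (q - m))]
  have h0 : 0 < lowerRoot θ q m * upperRoot θ q m := by
    have := quadratic_eq_mul_sub_roots hm.ne' (discrim_nonneg hm hmq hθ) 0
    nlinarith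
  have h1 : (1 - lowerRoot θ q m) * (1 - upperRoot θ q m) < 0 := by
    have := quadratic_eq_mul_sub_roots hm.ne' (discrim_nonneg hm hmq hθ) 1
    nlinarith
  have hlt1 : lowerRoot θ q m < 1 := by nlinarith
  have h1lt : 1 < upperRoot θ q m := by nlinarith
  exact ⟨pos_of_mul_pos_left h0 (by linarith), hlt1, h1lt⟩

theorem restrictedMap_zero : restrictedMap θ q m 0 = 0 := by
  rw [restrictedMap, exp_zero, show m * 1 + (θ + q - m - 1) = (θ + m - 1) * 1 + (q - m) by ring,
    log_div_self, mul_zero]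

theorem restrictedMap_num_pos (hm : 0 < m) (hmq : m < q) (hθ : q + 1 < θ) {y : ℝ} (hy : 0 < y) :
    0 < (θ + m - 1) * y + (q - m) := by
  nlinarith

theorem restrictedMap_den_pos (hm : 0 < m) (hmq : m < q) (hθ : q + 1 < θ) {y : ℝ} (hy : 0 < y) :
    0 < m * y + (θ + q - m - 1) := by
  nlinarith

theorem continuous_restrictedMap (hm : 0 < m) (hmq : m < q) (hθ : q + 1 < θ) :
    Continuous (restrictedMap θ q m) := by
  have hN := fun h => restrictedMap_num_pos hm hmq hθ (exp_pos h)
  have hD := fun h => restrictedMap_den_pos hm hmq hθ (exp_pos h)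
  unfold restrictedMap
  exact continuous_const.mul <|
    ((by fun_prop : Continuous _).div (by fun_prop) fun h => (hD h).ne').log
      fun h => (div_pos (hN h) (hD h)).ne'

theorem monotone_restrictedMap (hm : 0 < m) (hmq : m < q) (hθ : q + 1 < θ) :
    Monotone (restrictedMap θ q m) := by
  intro a b hab
  have hea := exp_pos a
  have heab := exp_le_exp.2 hab
  have hDa := restrictedMap_den_pos hm hmq hθ hea
  have hDb := restrictedMap_den_pos hm hmq hθ (exp_pos b)
  unfold restrictedMap
  gcongr 2 * log ?_
  · exact div_pos (restrictedMap_num_pos hm hmq hθ hea) hDa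
  · rw [div_le_div_iff₀ hDa hDb]
    -- the Möbius map `y ↦ (a y + b) / (c y + d)` increases since `ad - bc = (θ - 1)(θ + q - 1) > 0`
    nlinarith [mul_le_mul_of_nonneg_left heab (by nlinarith : (0:ℝ) ≤ (θ - 1) * (θ + q - 1))]

theorem exp_half_sq (h : ℝ) : exp (h / 2) ^ 2 = exp h := by
  rw [← exp_nat_mul]; ring_nf

theorem exp_half_mul_den_sub_num (hm : m ≠ 0) (hdisc : 0 ≤ (θ - 1) ^ 2 - 4 * m * (q - m))
    (h : ℝ) :
    exp (h / 2) * (m * exp h + (θ + q - m - 1)) - ((θ + m - 1) * exp h + (q - m)) =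
      m * ((exp (h / 2) - 1) * (exp (h / 2) - lowerRoot θ q m) *
        (exp (h / 2) - upperRoot θ q m)) := by
  rw [← exp_half_sq h]
  linear_combination (exp (h / 2) - 1) * quadratic_eq_mul_sub_roots hm hdisc (exp (h / 2))

theorem restrictedMap_lt_self_iff (hm : 0 < m) (hmq : m < q) (hθ : q + 1 < θ) (h : ℝ) :
    restrictedMap θ q m h < h ↔
      0 < (exp (h / 2) - 1) * (exp (h / 2) - lowerRoot θ q m) *
        (exp (h / 2) - upperRoot θ q m) := by
  have hD := restrictedMap_den_pos hm hmq hθ (exp_pos h)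
  have hN := restrictedMap_num_pos hm hmq hθ (exp_pos h)
  rw [← mul_pos_iff_of_pos_left hm,
    ← exp_half_mul_den_sub_num hm.ne' (discrim_nonneg hm hmq hθ), sub_pos,
    ← div_lt_iff₀ hD, ← log_lt_iff_lt_exp (div_pos hN hD), restrictedMap]
  constructor <;> intro <;> linarith

theorem self_lt_restrictedMap_iff (hm : 0 < m) (hmq : m < q) (hθ : q + 1 < θ) (h : ℝ) :
    h < restrictedMap θ q m h ↔
      (exp (h / 2) - 1) * (exp (h / 2) - lowerRoot θ q m) *
        (exp (h / 2) - upperRoot θ q m) < 0 := by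
  have hD := restrictedMap_den_pos hm hmq hθ (exp_pos h)
  have hN := restrictedMap_num_pos hm hmq hθ (exp_pos h)
  rw [← mul_lt_mul_iff_right₀ hm (c := 0), mul_zero,
    ← exp_half_mul_den_sub_num hm.ne' (discrim_nonneg hm hmq hθ), sub_neg,
    ← lt_div_iff₀ hD, ← lt_log_iff_exp_lt (div_pos hN hD), restrictedMap]
  constructor <;> intro <;> linarith

theorem isFixedPt_restrictedMap (hm : 0 < m) (hmq : m < q) (hθ : q + 1 < θ) {x : ℝ} (hx : 0 < x)
    (hroot : (x - 1) * (x - lowerRoot θ q m) * (x - upperRoot θ q m) = 0) :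
    IsFixedPt (restrictedMap θ q m) (2 * log x) := by
  have hx' : exp (2 * log x / 2) = x := by rw [mul_div_cancel_left₀ _ two_ne_zero, exp_log hx]
  refine le_antisymm (not_lt.1 fun h => ?_) (not_lt.1 fun h => ?_)
  · rw [self_lt_restrictedMap_iff hm hmq hθ, hx', hroot] at h; exact h.false
  · rw [restrictedMap_lt_self_iff hm hmq hθ, hx', hroot] at h; exact h.false

theorem tendsto_iterate_restrictedMap_of_pos (hm : 0 < m) (hmq : m < q) (hθ : q + 1 < θ) {h : ℝ}
    (h0 : 0 < h) :
    Tendsto (fun n => (restrictedMap θ q m)^[n] h) atTop (𝓝 (2 * log (upperRoot θ q m))) := by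
  obtain ⟨-, hx₁, hx₂⟩ := roots_bracket_one hm hmq hθ
  have hx₂0 : 0 < upperRoot θ q m := one_pos.trans hx₂
  refine tendsto_iterate_of_isFixedPt Set.ordConnected_Ioi (continuous_restrictedMap hm hmq hθ)
    (monotone_restrictedMap hm hmq hθ) (isFixedPt_restrictedMap hm hmq hθ hx₂0 (by ring))
    (mul_pos two_pos (log_pos hx₂)) h0 (fun x hx hxL => ?_) (fun x hx hLx => ?_)
  · have h1 : 1 < exp (x / 2) := one_lt_exp_iff.2 (half_pos hx)
    have h2 : exp (x / 2) < upperRoot θ q m := (lt_log_iff_exp_lt hx₂0).1 (by linarith)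
    rw [self_lt_restrictedMap_iff hm hmq hθ]
    exact mul_neg_of_pos_of_neg (mul_pos (by linarith) (by linarith)) (by linarith)
  · have h2 : upperRoot θ q m < exp (x / 2) := (log_lt_iff_lt_exp hx₂0).1 (by linarith)
    rw [restrictedMap_lt_self_iff hm hmq hθ]
    exact mul_pos (mul_pos (by linarith) (by linarith)) (by linarith)

theorem tendsto_iterate_restrictedMap_of_neg (hm : 0 < m) (hmq : m < q) (hθ : q + 1 < θ) {h : ℝ}
    (h0 : h < 0) :
    Tendsto (fun n => (restrictedMap θ q m)^[n] h) atTop (𝓝 (2 * log (lowerRoot θ q m))) := by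
  obtain ⟨hx₁0, hx₁, hx₂⟩ := roots_bracket_one hm hmq hθ
  refine tendsto_iterate_of_isFixedPt Set.ordConnected_Iio (continuous_restrictedMap hm hmq hθ)
    (monotone_restrictedMap hm hmq hθ) (isFixedPt_restrictedMap hm hmq hθ hx₁0 (by ring))
    (mul_neg_of_pos_of_neg two_pos (log_neg hx₁0 hx₁)) h0 (fun x hx hxL => ?_) (fun x hx hLx => ?_)
  · have h1 : exp (x / 2) < lowerRoot θ q m := (lt_log_iff_exp_lt hx₁0).1 (by linarith)
    rw [self_lt_restrictedMap_iff hm hmq hθ]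
    exact mul_neg_of_pos_of_neg (mul_pos_of_neg_of_neg (by linarith) (by linarith)) (by linarith)
  · have h1 : exp (x / 2) < 1 := exp_lt_one_iff.2 (by linarith [Set.mem_Iio.1 hx])
    have h2 : lowerRoot θ q m < exp (x / 2) := (log_lt_iff_lt_exp hx₁0).1 (by linarith)
    rw [restrictedMap_lt_self_iff hm hmq hθ]
    exact mul_pos_of_neg_of_neg (mul_neg_of_neg_of_pos (by linarith) (by linarith)) (by linarith)

end RestrictedMap

section BlockVec

def blockVec (k m : ℕ) (h : ℝ) : Fin k → ℝ := fun l => if (l : ℕ) < m then h else 0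

theorem blockVec_apply_of_lt {k m : ℕ} {l : Fin k} (hl : (l : ℕ) < m) (h : ℝ) :
    blockVec k m h l = h :=
  if_pos hl

theorem blockVec_apply_of_le {k m : ℕ} {l : Fin k} (hl : m ≤ (l : ℕ)) (h : ℝ) :
    blockVec k m h l = 0 :=
  if_neg hl.not_gt

theorem blockVec_zero (k m : ℕ) : blockVec k m 0 = 0 := by
  ext l; simp [blockVec]

theorem continuous_blockVec (k m : ℕ) : Continuous (blockVec k m) :=
  continuous_pi fun _ => continuous_id.if_const _ continuous_const

theorem eq_blockVec_of_mem {k m : ℕ} {v : Fin k → ℝ}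
    (hv : (∀ i j : Fin k, (i : ℕ) < m → (j : ℕ) < m → v i = v j) ∧
      ∀ i : Fin k, m ≤ (i : ℕ) → v i = 0)
    (i₀ : Fin k) (hi₀ : (i₀ : ℕ) < m) : v = blockVec k m (v i₀) := by
  ext i
  by_cases hi : (i : ℕ) < m
  · rw [blockVec_apply_of_lt hi, hv.1 i i₀ hi hi₀]
  · rw [blockVec_apply_of_le (not_lt.1 hi), hv.2 i (not_lt.1 hi)]

theorem sum_exp_blockVec {k m : ℕ} (hmk : m ≤ k) (h : ℝ) :
    ∑ p, exp (blockVec k m h p) = m * exp h + ((k : ℝ) - m) := by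
  simp only [blockVec, apply_ite exp, exp_zero, Finset.sum_ite, Finset.sum_const, nsmul_eq_mul,
    mul_one]
  have hlt : (Finset.univ.filter fun p : Fin k => (p : ℕ) < m).card = m := by
    rw [Fin.card_filter_val_lt, min_eq_right hmk]
  have hge : (Finset.univ.filter fun p : Fin k => ¬(p : ℕ) < m).card = k - m := by
    have := Finset.card_filter_add_card_filter_not (s := Finset.univ) (fun p : Fin k => (p : ℕ) < m)
    rw [Finset.card_univ, Fintype.card_fin, hlt] at this
    omega
  rw [hlt, hge, Nat.cast_sub hmk]

end BlockVec

noncomputable def pottsMap (θ : ℝ) (k : ℕ) (x : Fin k → ℝ) : Fin k → ℝ := fun l =>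
  2 * log (((θ - 1) * exp (x l) + (∑ p, exp (x p)) + 1) / (θ + ∑ p, exp (x p)))

theorem semiconj_blockVec_restrictedMap (θ : ℝ) {q m : ℕ} (hmq : m + 1 ≤ q) :
    Semiconj (blockVec (q - 1) m) (restrictedMap θ q m) (pottsMap θ (q - 1)) := by
  intro h
  ext l
  rw [pottsMap, sum_exp_blockVec (by omega), Nat.cast_sub (by omega : 1 ≤ q), Nat.cast_one]
  by_cases hl : (l : ℕ) < m
  · rw [blockVec_apply_of_lt hl, blockVec_apply_of_lt hl, restrictedMap]
    congr 3 <;> ring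
  · rw [not_lt] at hl
    rw [blockVec_apply_of_le hl, blockVec_apply_of_le hl, exp_zero]
    generalize (m : ℝ) * exp h + ((q : ℝ) - 1 - m) = S
    rw [show (θ - 1) * 1 + S + 1 = θ + S by ring, log_div_self, mul_zero]

/-- For k=2 and θ > q+1: iterates of G starting from v ∈ I_m converge to the
vector with m copies of h₂ if v₀ > 0, to m copies of h₁ if v₀ < 0, and stay
at 0 if v₀ = 0. -/
theorem G_iterates_limits (θ : ℝ) (q m : ℕ) (hm : 1 ≤ m)
    (hm2 : m ≤ q / 2) (hθ : (q : ℝ) + 1 < θ)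
    (G : (Fin (q - 1) → ℝ) → (Fin (q - 1) → ℝ))
    (hG : G = fun x l =>
      2 * Real.log (((θ - 1) * Real.exp (x l) + (∑ p, Real.exp (x p)) + 1) /
        (θ + ∑ p, Real.exp (x p))))
    (Im : Set (Fin (q - 1) → ℝ))
    (hIm : Im = {v | (∀ i j : Fin (q - 1), (i : ℕ) < m → (j : ℕ) < m → v i = v j) ∧
      ∀ i : Fin (q - 1), m ≤ (i : ℕ) → v i = 0})
    (h₁ h₂ : ℝ)
    (hh₁ : h₁ =
      2 * Real.log ((θ - 1 - Real.sqrt ((θ - 1) ^ 2 - 4 * m * ((q : ℝ) - m))) / (2 * m)))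
    (hh₂ : h₂ =
      2 * Real.log ((θ - 1 + Real.sqrt ((θ - 1) ^ 2 - 4 * m * ((q : ℝ) - m))) / (2 * m)))
    (v : Fin (q - 1) → ℝ) (hv : v ∈ Im) :
    (0 < v ⟨0, by omega⟩ →
      Filter.Tendsto (fun n => G^[n] v) Filter.atTop
        (nhds (fun l => if (l : ℕ) < m then h₂ else 0))) ∧
    (v ⟨0, by omega⟩ < 0 →
      Filter.Tendsto (fun n => G^[n] v) Filter.atTop
        (nhds (fun l => if (l : ℕ) < m then h₁ else 0))) ∧
    (v ⟨0, by omega⟩ = 0 → ∀ n : ℕ, G^[n] v = 0) := by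
  have hmq : m + 1 ≤ q := by omega
  have hm' : (0 : ℝ) < m := by exact_mod_cast hm
  have hmq' : (m : ℝ) < q := by exact_mod_cast hmq
  have hG' : G = pottsMap θ (q - 1) := hG
  subst hG' hIm hh₁ hh₂
  rw [eq_blockVec_of_mem hv ⟨0, by omega⟩ hm, blockVec_apply_of_lt (l := ⟨0, _⟩) hm]
  have hiter : ∀ n a, (pottsMap θ (q - 1))^[n] (blockVec (q - 1) m a) =
      blockVec (q - 1) m ((restrictedMap θ q m)^[n] a) :=
    fun n a => ((semiconj_blockVec_restrictedMap θ hmq).iterate_right n a).symm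
  simp only [hiter]
  refine ⟨fun h0 => ?_, fun h0 => ?_, fun h0 n => ?_⟩
  · exact (continuous_blockVec _ m).tendsto _ |>.comp
      (tendsto_iterate_restrictedMap_of_pos hm' hmq' hθ h0)
  · exact (continuous_blockVec _ m).tendsto _ |>.comp
      (tendsto_iterate_restrictedMap_of_neg hm' hmq' hθ h0)
  · rw [h0, iterate_fixed restrictedMap_zero, blockVec_zero]
end

section
/- For k = 2, q ≥ 3, 1 ≤ m ≤ ⌊q/2⌋ and θ > 1: if θ < θ_m then the equation m x² - (θ-1)x + (q-m) = 0 has no positive real solutions, so 0 is the unique fixed point of f_m; hence if θ < θ_1 = 1+2√(q-1) then for every m with 1 ≤ m ≤ ⌊q/2⌋, 0 is the unique fixed point of f_m. -/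
/-!
With `x = e^{h/2}`, the fixed-point equation `f_m(h) = h` clears denominators to
`(x - 1)(m x² - (θ - 1) x + (q - m)) = 0`. By AM-GM, `m x² + (q - m) ≥ 2√(m(q - m)) x`, so for
`θ < θ_m` the quadratic factor is positive on `x > 0`, leaving only `x = 1`, i.e. `h = 0`.
Finally `(m - 1)(q - m - 1) ≥ 0` gives `θ_1 ≤ θ_m` for `1 ≤ m ≤ q/2`.
-/

open Real

noncomputable def fixedPointMap (q m θ h : ℝ) : ℝ :=
  2 * log (((θ + m - 1) * exp h + (q - m)) / (m * exp h + q - m - 1 + θ))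

lemma two_mul_sqrt_mul_mul_le {a b : ℝ} (ha : 0 ≤ a) (hb : 0 ≤ b) (x : ℝ) :
    2 * √(a * b) * x ≤ a * x ^ 2 + b :=
  calc 2 * √(a * b) * x = 2 * (√a * x) * √b := by rw [sqrt_mul ha]; ring
    _ ≤ (√a * x) ^ 2 + √b ^ 2 := two_mul_le_add_sq _ _
    _ = a * x ^ 2 + b := by rw [mul_pow, sq_sqrt ha, sq_sqrt hb]

lemma quadratic_pos_of_lt_two_sqrt {a b t x : ℝ} (ha : 0 ≤ a) (hb : 0 ≤ b)
    (ht : t < 2 * √(a * b)) (hx : 0 < x) : 0 < a * x ^ 2 - t * x + b := by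
  linarith [two_mul_sqrt_mul_mul_le ha hb x, mul_lt_mul_of_pos_right ht hx]

lemma fixedPointMap_eq_self_iff {q m θ : ℝ} (hm : 0 ≤ m) (hqm : 0 ≤ q - m) (hθ : 1 < θ)
    (h : ℝ) : fixedPointMap q m θ h = h ↔
      (exp (h / 2) - 1) * (m * exp (h / 2) ^ 2 - (θ - 1) * exp (h / 2) + (q - m)) = 0 := by
  have hexp : exp h = exp (h / 2) ^ 2 := by rw [← exp_nat_mul]; ring_nf
  have hmexp : 0 ≤ m * exp h := mul_nonneg hm (exp_pos h).le
  have hD : 0 < m * exp h + q - m - 1 + θ := by linarith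
  have hN : 0 < (θ + m - 1) * exp h + (q - m) := by nlinarith [exp_pos h]
  calc fixedPointMap q m θ h = h
      ↔ log (((θ + m - 1) * exp h + (q - m)) / (m * exp h + q - m - 1 + θ)) = h / 2 := by
        unfold fixedPointMap; constructor <;> intro <;> linarith
    _ ↔ ((θ + m - 1) * exp h + (q - m)) / (m * exp h + q - m - 1 + θ) = exp (h / 2) := by
        constructor
        · intro hlog; rw [← hlog, exp_log (div_pos hN hD)]
        · intro hdiv; rw [hdiv, log_exp]
    _ ↔ (θ + m - 1) * exp h + (q - m) = exp (h / 2) * (m * exp h + q - m - 1 + θ) :=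
        div_eq_iff hD.ne'
    _ ↔ _ := by rw [hexp]; constructor <;> intro hx <;> linear_combination (-1 : ℝ) * hx

lemma pos_of_lt_two_sqrt_mul {a b t : ℝ} (ha : 0 ≤ a) (ht : 0 ≤ t) (h : t < 2 * √(a * b)) :
    0 < b :=
  pos_of_mul_pos_right (sqrt_pos.mp (by linarith)) ha

lemma fixedPointMap_eq_self_iff_eq_zero {q m θ : ℝ} (hm : 0 ≤ m) (hqm : 0 ≤ q - m)
    (hθ : 1 < θ) (hθm : θ < 1 + 2 * √(m * (q - m))) (h : ℝ) :
    fixedPointMap q m θ h = h ↔ h = 0 := by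
  have hquad := quadratic_pos_of_lt_two_sqrt hm hqm (by linarith : θ - 1 < _) (exp_pos (h / 2))
  rw [fixedPointMap_eq_self_iff hm hqm hθ, mul_eq_zero, or_iff_left hquad.ne', sub_eq_zero,
    exp_eq_one_iff, div_eq_zero_iff, or_iff_left two_ne_zero]

lemma sub_one_le_mul_sub {q m : ℕ} (hm : 1 ≤ m) (hmq : m ≤ q / 2) :
    (q : ℝ) - 1 ≤ m * (q - m) := by
  have h2m : (m : ℝ) * 2 ≤ q := by exact_mod_cast (Nat.le_div_iff_mul_le two_pos).mp hmq
  have h1m : (1 : ℝ) ≤ m := by exact_mod_cast hm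
  nlinarith

theorem unique_fixed_point_small_theta_general (θ : ℝ) (q m : ℕ) (hθ : 1 < θ) :
    (θ < 1 + 2 * Real.sqrt ((m : ℝ) * ((q : ℝ) - m)) →
      (∀ x : ℝ, 0 < x → (m : ℝ) * x ^ 2 - (θ - 1) * x + ((q : ℝ) - m) ≠ 0) ∧
      (∀ h : ℝ,
        2 * Real.log (((θ + m - 1) * Real.exp h + ((q : ℝ) - m)) /
          ((m : ℝ) * Real.exp h + (q : ℝ) - m - 1 + θ)) = h ↔ h = 0)) ∧
    (θ < 1 + 2 * Real.sqrt ((q : ℝ) - 1) →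
      ∀ m' : ℕ, 1 ≤ m' → m' ≤ q / 2 →
        ∀ h : ℝ,
          2 * Real.log (((θ + m' - 1) * Real.exp h + ((q : ℝ) - m')) /
            ((m' : ℝ) * Real.exp h + (q : ℝ) - m' - 1 + θ)) = h ↔ h = 0) := by
  have hqm : ∀ n : ℕ, θ < 1 + 2 * √(n * (q - n)) → 0 ≤ (q : ℝ) - n := fun n hθn =>
    (pos_of_lt_two_sqrt_mul n.cast_nonneg (sub_nonneg.2 hθ.le) (by linarith)).le
  refine ⟨fun hθm => ⟨fun x hx => ?_, fixedPointMap_eq_self_iff_eq_zero m.cast_nonneg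
    (hqm m hθm) hθ hθm⟩, fun hθ1 m' hm' hm'q => ?_⟩
  · exact (quadratic_pos_of_lt_two_sqrt m.cast_nonneg (hqm m hθm) (by linarith) hx).ne'
  · have hθm' : θ < 1 + 2 * √(m' * (q - m')) :=
      hθ1.trans_le (by gcongr; exact sub_one_le_mul_sub hm' hm'q)
    exact fixedPointMap_eq_self_iff_eq_zero m'.cast_nonneg (hqm m' hθm') hθ hθm'

/-- For k=2, θ > 1: if θ < θ_m then the quadratic has no positive roots and 0
is the unique fixed point of f_m; hence if θ < θ_1 = 1+2√(q-1), then for every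
m with 1 ≤ m ≤ ⌊q/2⌋, 0 is the unique fixed point of f_m. -/
theorem unique_fixed_point_small_theta (θ : ℝ) (q m : ℕ) (hq : 3 ≤ q)
    (hm : 1 ≤ m) (hm2 : m ≤ q / 2) (hθ : 1 < θ) :
    (θ < 1 + 2 * Real.sqrt ((m : ℝ) * ((q : ℝ) - m)) →
      (∀ x : ℝ, 0 < x → (m : ℝ) * x ^ 2 - (θ - 1) * x + ((q : ℝ) - m) ≠ 0) ∧
      (∀ h : ℝ,
        2 * Real.log (((θ + m - 1) * Real.exp h + ((q : ℝ) - m)) /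
          ((m : ℝ) * Real.exp h + (q : ℝ) - m - 1 + θ)) = h ↔ h = 0)) ∧
    (θ < 1 + 2 * Real.sqrt ((q : ℝ) - 1) →
      ∀ m' : ℕ, 1 ≤ m' → m' ≤ q / 2 →
        ∀ h : ℝ,
          2 * Real.log (((θ + m' - 1) * Real.exp h + ((q : ℝ) - m')) /
            ((m' : ℝ) * Real.exp h + (q : ℝ) - m' - 1 + θ)) = h ↔ h = 0) :=
  unique_fixed_point_small_theta_general θ q m hθ
end
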